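/- Approximate nearest neighbor via shifted z-orders: let P be a finite set of points in [0,1)^d, let v^{(j)} = (j/(d+1),...,j/(d+1)) for j = 0,...,d, and let c = √d·(4d+4) + 1. For any query point q ∈ [0,1)^d, among the (at most) 2(d+1) points of P that are the z-order predecessor or successor of q in one of the d+1 shifted lists {σ(p + v^{(j)}) : p ∈ P}, there exists a point p* with dist(q, p*) ≤ c · min_{p ∈ P} dist(q, p). -/

import Mathlib

/-- The `j`-th binary digit of a real number `x ∈ [0,2)`; `j = 0` gives the
integer ("ones") bit and `j ≥ 1` the fractional bits. -/
noncomputable def rbit (x : ℝ) (j : ℕ) : ℕ := (⌊x * 2 ^ j⌋ % 2).toNat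

/-- The z-order (shuffle) value of a point `p ∈ [0,2)^d`: the real number whose
binary expansion interleaves the binary digits of the coordinates of `p`, most
significant bits first, coordinate `0` first at each bit level. -/
noncomputable def zval (d : ℕ) [NeZero d] (p : EuclideanSpace ℝ (Fin d)) : ℝ :=
  ∑' m : ℕ, (rbit (p ⟨m % d, Nat.mod_lt m (NeZero.pos d)⟩) (m / d) : ℝ) / 2 ^ (m + 1)

/-- The shift vector `v⁽ʲ⁾ = (j/(d+1), …, j/(d+1))`. -/
noncomputable def shiftv (d : ℕ) (j : ℕ) : EuclideanSpace ℝ (Fin d) :=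
  WithLp.toLp 2 (fun _ => (j:ℝ) / ((d:ℝ) + 1))

/-!
Let `p₀` be a nearest neighbour of `q`, at distance `r`, and pick `L` with `2 ^ (-L) ≈ (d + 1) r`.
As `d + 1` is odd, `2 ^ L` is invertible modulo `d + 1`, so modulo the grid `2 ^ (-L) ℤ` the
shifts `j / (d + 1)` are pairwise at least `1 / ((d + 1) 2 ^ L)` apart; hence each coordinate
segment between `q` and `p₀` is cut by the shifted grid for at most one `j`, and among the `d + 1`
shifts one puts `q` and `p₀` in a common dyadic cell of side `2 ^ (-L)`. The first `d (L + 1)`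
binary digits of the z-value interleave the first `L + 1` digits of the coordinates, so dyadic
cells are intervals of the z-order: whichever of the predecessor and successor of `q` lies between
`q` and `p₀` in z-order shares their cell and is within `√d 2 ^ (-L) < 2 √d (d + 1) r` of `q`.
-/

lemma rbit_le_one (x : ℝ) (j : ℕ) : rbit x j ≤ 1 := by
  have := Int.emod_two_eq ⌊x * 2 ^ j⌋
  unfold rbit
  omega

lemma floor_mul_two_pow_succ (x : ℝ) (j : ℕ) :
    ⌊x * 2 ^ (j + 1)⌋ = 2 * ⌊x * 2 ^ j⌋ + rbit x (j + 1) := by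
  have hx : x * 2 ^ (j + 1) = 2 * (x * 2 ^ j) := by ring
  have lo : 2 * ⌊x * 2 ^ j⌋ ≤ ⌊x * 2 ^ (j + 1)⌋ :=
    Int.le_floor.2 (by push_cast; rw [hx]; linarith [Int.floor_le (x * 2 ^ j)])
  have hi : ⌊x * 2 ^ (j + 1)⌋ < 2 * ⌊x * 2 ^ j⌋ + 2 :=
    Int.floor_lt.2 (by push_cast; rw [hx]; linarith [Int.lt_floor_add_one (x * 2 ^ j)])
  have := Int.emod_two_eq ⌊x * 2 ^ (j + 1)⌋
  unfold rbit
  omega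

lemma floor_mul_two_pow_eq_ediv (x : ℝ) (j : ℕ) : ⌊x * 2 ^ j⌋ = ⌊x * 2 ^ (j + 1)⌋ / 2 := by
  have := rbit_le_one x (j + 1)
  rw [floor_mul_two_pow_succ]
  omega

lemma rbit_eq_of_floor_eq {x y : ℝ} {N : ℕ} (h : ⌊x * 2 ^ N⌋ = ⌊y * 2 ^ N⌋) :
    ∀ j ≤ N, rbit x j = rbit y j := by
  intro j hj
  suffices ⌊x * 2 ^ j⌋ = ⌊y * 2 ^ j⌋ by simp only [rbit, this]
  induction hj using Nat.decreasingInduction with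
  | self => exact h
  | of_succ k _ ih => rw [floor_mul_two_pow_eq_ediv x, floor_mul_two_pow_eq_ediv y, ih]

lemma floor_eq_of_rbit_eq {x y : ℝ} (hx : x ∈ Set.Ico 0 2) (hy : y ∈ Set.Ico 0 2) {N : ℕ}
    (h : ∀ j ≤ N, rbit x j = rbit y j) : ⌊x * 2 ^ N⌋ = ⌊y * 2 ^ N⌋ := by
  induction N with
  | zero =>
    have floor_eq_rbit : ∀ z ∈ Set.Ico (0 : ℝ) 2, ⌊z * 2 ^ 0⌋ = rbit z 0 := fun z hz => by
      have : ⌊z⌋ < 2 := Int.floor_lt.2 (by exact_mod_cast hz.2)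
      have : 0 ≤ ⌊z⌋ := Int.floor_nonneg.2 hz.1
      simp only [rbit, pow_zero, mul_one]
      omega
    rw [floor_eq_rbit x hx, floor_eq_rbit y hy, h 0 le_rfl]
  | succ N ih =>
    rw [floor_mul_two_pow_succ, floor_mul_two_pow_succ, ih fun j hj => h j (by omega),
      h (N + 1) le_rfl]

theorem floor_mul_two_pow_eq_iff {x y : ℝ} (hx : x ∈ Set.Ico 0 2) (hy : y ∈ Set.Ico 0 2)
    (N : ℕ) : ⌊x * 2 ^ N⌋ = ⌊y * 2 ^ N⌋ ↔ ∀ j ≤ N, rbit x j = rbit y j :=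
  ⟨rbit_eq_of_floor_eq, floor_eq_of_rbit_eq hx hy⟩

lemma exists_rbit_eq_zero (x : ℝ) (N : ℕ) : ∃ j, N ≤ j ∧ rbit x j = 0 := by
  by_contra! hones
  have floor_eq : ∀ k, ⌊x * 2 ^ (N + k)⌋ + 1 = 2 ^ k * (⌊x * 2 ^ N⌋ + 1) := by
    intro k
    induction k with
    | zero => simp
    | succ k ih =>
      have := rbit_le_one x (N + k + 1)
      have := hones (N + k + 1) (by omega)
      rw [← add_assoc, floor_mul_two_pow_succ, pow_succ]
      grind
  set g := (⌊x * 2 ^ N⌋ + 1 : ℝ) - x * 2 ^ N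
  have hg : 0 < g := by linarith [Int.lt_floor_add_one (x * 2 ^ N)]
  obtain ⟨k, hk⟩ := pow_unbounded_of_one_lt g⁻¹ one_lt_two
  have : (2 : ℝ) ^ k * g ≤ 1 := by
    have hfloor : ((⌊x * 2 ^ (N + k)⌋ + 1 : ℤ) : ℝ) = 2 ^ k * (⌊x * 2 ^ N⌋ + 1) := by
      exact_mod_cast floor_eq k
    have := Int.floor_le (x * 2 ^ (N + k))
    push_cast at hfloor
    have e : x * 2 ^ (N + k) = 2 ^ k * (x * 2 ^ N) := by ring
    linear_combination this - hfloor - e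
  have := (inv_lt_iff_one_lt_mul₀ hg).1 hk
  linarith

section BinarySeries

variable {a : ℕ → ℕ}

lemma hasSum_one_div_two_pow_succ : HasSum (fun i : ℕ => (1 : ℝ) / 2 ^ (i + 1)) 1 := by
  convert hasSum_geometric_two' 1 using 2 with i
  rw [pow_succ]; ring

lemma binary_term_le (ha : ∀ i, a i ≤ 1) (i : ℕ) : (a i : ℝ) / 2 ^ (i + 1) ≤ 1 / 2 ^ (i + 1) := by
  gcongr
  exact_mod_cast ha i

lemma summable_binary (ha : ∀ i, a i ≤ 1) : Summable fun i => (a i : ℝ) / 2 ^ (i + 1) :=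
  .of_nonneg_of_le (fun i => by positivity) (binary_term_le ha)
    hasSum_one_div_two_pow_succ.summable

lemma tsum_binary_lt_one (ha : ∀ i, a i ≤ 1) {i₀ : ℕ} (hi₀ : a i₀ = 0) :
    ∑' i, (a i : ℝ) / 2 ^ (i + 1) < 1 := by
  rw [← hasSum_one_div_two_pow_succ.tsum_eq]
  exact Summable.tsum_lt_tsum_of_nonneg (i := i₀) (fun i => by positivity) (binary_term_le ha)
    (by simp [hi₀]) hasSum_one_div_two_pow_succ.summable

lemma tsum_binary_eq (ha : ∀ i, a i ≤ 1) :
    ∑' i, (a i : ℝ) / 2 ^ (i + 1) = (a 0 + (∑' i, (a (i + 1) : ℝ) / 2 ^ (i + 1))) / 2 := by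
  rw [(summable_binary ha).tsum_eq_zero_add, add_div, ← tsum_div_const]
  congr 1
  · simp
  · congr 1 with i
    rw [pow_succ]; ring

end BinarySeries

section ZOrder

noncomputable def zdigit (d : ℕ) [NeZero d] (p : EuclideanSpace ℝ (Fin d)) (m : ℕ) : ℕ :=
  rbit (p ⟨m % d, Nat.mod_lt m (NeZero.pos d)⟩) (m / d)

noncomputable def zprefix (d : ℕ) [NeZero d] (p : EuclideanSpace ℝ (Fin d)) : ℕ → ℕ
  | 0 => 0
  | N + 1 => 2 * zprefix d p N + zdigit d p N

noncomputable def ztail (d : ℕ) [NeZero d] (p : EuclideanSpace ℝ (Fin d)) (N : ℕ) : ℝ :=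
  ∑' i, (zdigit d p (N + i) : ℝ) / 2 ^ (i + 1)

variable {d : ℕ} [NeZero d]

lemma zdigit_le_one (p : EuclideanSpace ℝ (Fin d)) (m : ℕ) : zdigit d p m ≤ 1 :=
  rbit_le_one _ _

lemma zdigit_add_mul (p : EuclideanSpace ℝ (Fin d)) (i : Fin d) (k : ℕ) :
    zdigit d p (i + k * d) = rbit (p i) k := by
  have hd := NeZero.pos d
  have hmod : (i + k * d) % d = i := by rw [Nat.add_mul_mod_self_right, Nat.mod_eq_of_lt i.isLt]
  have hdiv : (i + k * d) / d = k := by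
    rw [Nat.add_mul_div_right _ _ hd, Nat.div_eq_of_lt i.isLt, zero_add]
  simp only [zdigit, hmod, hdiv]

lemma ztail_nonneg (p : EuclideanSpace ℝ (Fin d)) (N : ℕ) : 0 ≤ ztail d p N :=
  tsum_nonneg fun _ => by positivity

lemma ztail_lt_one (p : EuclideanSpace ℝ (Fin d)) (N : ℕ) : ztail d p N < 1 := by
  obtain ⟨k, hNk, hk⟩ := exists_rbit_eq_zero (p 0) N
  have hzero : zdigit d p (N + (k * d - N)) = 0 := by
    have : N ≤ k * d := hNk.trans (Nat.le_mul_of_pos_right k (NeZero.pos d))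
    rw [Nat.add_sub_cancel' this, ← zero_add (k * d)]
    exact (zdigit_add_mul p 0 k).trans hk
  exact tsum_binary_lt_one (fun i => zdigit_le_one p _) hzero

lemma zval_mul_two_pow (p : EuclideanSpace ℝ (Fin d)) (N : ℕ) :
    zval d p * 2 ^ N = zprefix d p N + ztail d p N := by
  induction N with
  | zero => simp [zprefix, ztail, zval, zdigit]
  | succ N ih =>
    have htail : ztail d p N = (zdigit d p N + ztail d p (N + 1)) / 2 := by
      simp only [ztail, add_assoc, add_comm 1]
      exact tsum_binary_eq (a := fun i => zdigit d p (N + i)) fun i => zdigit_le_one p _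
    rw [pow_succ, ← mul_assoc, ih, htail, zprefix]
    push_cast
    ring

lemma floor_zval_mul_two_pow (p : EuclideanSpace ℝ (Fin d)) (N : ℕ) :
    ⌊zval d p * 2 ^ N⌋ = zprefix d p N := by
  rw [Int.floor_eq_iff, zval_mul_two_pow]
  push_cast
  exact ⟨by linarith [ztail_nonneg p N], by linarith [ztail_lt_one p N]⟩

lemma rbit_zval_succ (p : EuclideanSpace ℝ (Fin d)) (m : ℕ) :
    rbit (zval d p) (m + 1) = zdigit d p m := by
  have h := floor_mul_two_pow_succ (zval d p) m
  rw [floor_zval_mul_two_pow, floor_zval_mul_two_pow, zprefix] at h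
  omega

lemma zprefix_congr {p q : EuclideanSpace ℝ (Fin d)} {N : ℕ}
    (h : ∀ m < N, zdigit d p m = zdigit d q m) : zprefix d p N = zprefix d q N := by
  induction N with
  | zero => rfl
  | succ N ih =>
    rw [zprefix, zprefix, ih fun m hm => h m (by omega), h N N.lt_succ_self]

theorem floor_zval_mul_two_pow_eq_iff (p q : EuclideanSpace ℝ (Fin d)) (N : ℕ) :
    ⌊zval d p * 2 ^ N⌋ = ⌊zval d q * 2 ^ N⌋ ↔ ∀ m < N, zdigit d p m = zdigit d q m := by
  refine ⟨fun h m hm => ?_, fun h => by rw [floor_zval_mul_two_pow, floor_zval_mul_two_pow,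
    zprefix_congr h]⟩
  rw [← rbit_zval_succ, ← rbit_zval_succ]
  exact rbit_eq_of_floor_eq h (m + 1) hm

lemma forall_zdigit_eq_iff (p q : EuclideanSpace ℝ (Fin d)) (L : ℕ) :
    (∀ m < d * (L + 1), zdigit d p m = zdigit d q m) ↔
      ∀ i, ∀ k ≤ L, rbit (p i) k = rbit (q i) k := by
  have hd := NeZero.pos d
  constructor
  · intro h i k hk
    rw [← zdigit_add_mul, ← zdigit_add_mul]
    exact h _ (by nlinarith [i.isLt])
  · intro h m hm
    exact h _ _ (Nat.lt_succ_iff.1 ((Nat.div_lt_iff_lt_mul hd).2 (by linarith)))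

end ZOrder

section DyadicCells

variable {d : ℕ}

def SameDyadicCell (L : ℕ) (x y : EuclideanSpace ℝ (Fin d)) : Prop :=
  ∀ i, ⌊x i * 2 ^ L⌋ = ⌊y i * 2 ^ L⌋

lemma dist_le_sqrt_mul_of_abs_sub_le {x y : EuclideanSpace ℝ (Fin d)} {t : ℝ} (ht : 0 ≤ t)
    (h : ∀ i, |x i - y i| ≤ t) : dist x y ≤ √d * t := by
  rw [EuclideanSpace.dist_eq, ← Real.sqrt_sq ht, ← Real.sqrt_mul (Nat.cast_nonneg d)]
  gcongr
  calc ∑ i, dist (x i) (y i) ^ 2 ≤ ∑ _i : Fin d, t ^ 2 := by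
        gcongr with i
        rw [Real.dist_eq]
        exact h i
    _ = d * t ^ 2 := by simp

lemma SameDyadicCell.dist_le {L : ℕ} {x y : EuclideanSpace ℝ (Fin d)}
    (h : SameDyadicCell L x y) : dist x y ≤ √d / 2 ^ L := by
  rw [div_eq_mul_one_div]
  refine dist_le_sqrt_mul_of_abs_sub_le (by positivity) fun i => ?_
  have := Int.abs_sub_lt_one_of_floor_eq_floor (h i)
  rw [← sub_mul, abs_mul, abs_of_pos (by positivity : (0 : ℝ) < 2 ^ L)] at this
  rw [le_div_iff₀ (by positivity)]
  exact this.le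

lemma dist_le_sqrt_of_mem_Ico {x y : EuclideanSpace ℝ (Fin d)} (hx : ∀ i, x i ∈ Set.Ico 0 1)
    (hy : ∀ i, y i ∈ Set.Ico 0 1) : dist x y ≤ √d := by
  rw [← mul_one √d]
  refine dist_le_sqrt_mul_of_abs_sub_le zero_le_one fun i => abs_sub_le_iff.2 ⟨?_, ?_⟩
  · linarith [(hx i).2, (hy i).1]
  · linarith [(hx i).1, (hy i).2]

variable [NeZero d]

theorem sameDyadicCell_iff_floor_zval_eq {x y : EuclideanSpace ℝ (Fin d)}
    (hx : ∀ i, x i ∈ Set.Ico 0 2) (hy : ∀ i, y i ∈ Set.Ico 0 2) (L : ℕ) :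
    SameDyadicCell L x y ↔ ⌊zval d x * 2 ^ (d * (L + 1))⌋ = ⌊zval d y * 2 ^ (d * (L + 1))⌋ := by
  rw [floor_zval_mul_two_pow_eq_iff, forall_zdigit_eq_iff]
  exact forall_congr' fun i => floor_mul_two_pow_eq_iff (hx i) (hy i) L

theorem SameDyadicCell.of_zval_mem_uIcc {L : ℕ} {x y w : EuclideanSpace ℝ (Fin d)}
    (hx : ∀ i, x i ∈ Set.Ico 0 2) (hy : ∀ i, y i ∈ Set.Ico 0 2) (hw : ∀ i, w i ∈ Set.Ico 0 2)
    (h : SameDyadicCell L x y) (hzw : zval d w ∈ Set.uIcc (zval d x) (zval d y)) :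
    SameDyadicCell L x w := by
  rw [sameDyadicCell_iff_floor_zval_eq hx hy] at h
  rw [sameDyadicCell_iff_floor_zval_eq hx hw]
  have floor_mono : ∀ {u v : ℝ}, u ≤ v → ⌊u * 2 ^ (d * (L + 1))⌋ ≤ ⌊v * 2 ^ (d * (L + 1))⌋ :=
    fun huv => Int.floor_mono (by gcongr)
  rcases Set.mem_uIcc.1 hzw with ⟨h₁, h₂⟩ | ⟨h₁, h₂⟩
  · exact le_antisymm (floor_mono h₁) (h ▸ floor_mono h₂)
  · exact le_antisymm (h ▸ floor_mono h₁) (floor_mono h₂)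

end DyadicCells

section Shifts

variable {d : ℕ}

@[simp]
lemma shiftv_apply (j : ℕ) (i : Fin d) : shiftv d j i = j / (d + 1) := rfl

lemma add_shiftv_mem_Ico {p : EuclideanSpace ℝ (Fin d)} (hp : ∀ i, p i ∈ Set.Ico 0 1) {j : ℕ}
    (hj : j ≤ d) (i : Fin d) : (p + shiftv d j) i ∈ Set.Ico 0 2 := by
  have hjd : (j : ℝ) / (d + 1) < 1 :=
    (div_lt_one (by positivity)).2 (by exact_mod_cast hj.trans_lt d.lt_succ_self)
  rw [PiLp.add_apply, shiftv_apply]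
  constructor <;> linarith [(hp i).1, (hp i).2, (by positivity : (0 : ℝ) ≤ j / (d + 1))]

lemma eq_of_dvd_sub_mul_two_pow (hd : Even d) {j j' : ℕ} (hj : j ≤ d) (hj' : j' ≤ d) {L : ℕ}
    (h : (d + 1 : ℤ) ∣ (j - j') * 2 ^ L) : j = j' := by
  have hcop : IsCoprime (d + 1 : ℤ) (2 ^ L) := by
    have : Nat.Coprime (d + 1) 2 := hd.add_one.coprime_two_right
    exact_mod_cast (Nat.isCoprime_iff_coprime.2 this).pow_right
  have := Int.eq_zero_of_abs_lt_dvd (hcop.dvd_of_dvd_mul_right h) (by rw [abs_lt]; omega)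
  omega

lemma eq_of_floor_add_shift_ne (hd : Even d) {a b : ℝ} {L : ℕ}
    (hab : |a - b| * 2 ^ L * (d + 1) ≤ 1) {j j' : ℕ} (hj : j ≤ d) (hj' : j' ≤ d)
    (h : ⌊(a + j / (d + 1)) * 2 ^ L⌋ ≠ ⌊(b + j / (d + 1)) * 2 ^ L⌋)
    (h' : ⌊(a + j' / (d + 1)) * 2 ^ L⌋ ≠ ⌊(b + j' / (d + 1)) * 2 ^ L⌋) : j = j' := by
  wlog hle : a ≤ b generalizing a b
  · exact this (by rwa [abs_sub_comm]) h.symm h'.symm (le_of_not_ge hle)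
  have cut : ∀ s : ℝ, ⌊(a + s) * 2 ^ L⌋ ≠ ⌊(b + s) * 2 ^ L⌋ →
      (a + s) * 2 ^ L < ⌊(b + s) * 2 ^ L⌋ := fun s hs =>
    Int.floor_lt.1 ((Int.floor_mono (by gcongr)).lt_of_ne hs)
  set n := ⌊(b + j / (d + 1)) * 2 ^ L⌋
  set n' := ⌊(b + j' / (d + 1)) * 2 ^ L⌋
  have hM : ((d + 1) * (n - n') - (j - j') * 2 ^ L : ℤ) = 0 := by
    refine Int.abs_lt_one_iff.1 ?_
    have hreal : (((d + 1) * (n - n') - (j - j') * 2 ^ L : ℤ) : ℝ) =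
        (d + 1) * ((n - (b + j / (d + 1)) * 2 ^ L) - (n' - (b + j' / (d + 1)) * 2 ^ L)) := by
      push_cast
      field_simp
      ring
    rw [← Int.cast_lt (R := ℝ), Int.cast_abs, hreal, Int.cast_one, abs_lt]
    rw [abs_sub_comm, abs_of_nonneg (sub_nonneg.2 hle)] at hab
    have := cut _ h
    have := cut _ h'
    have := Int.floor_le ((b + j / (d + 1)) * 2 ^ L)
    have := Int.floor_le ((b + j' / (d + 1)) * 2 ^ L)
    constructor <;> nlinarith
  exact eq_of_dvd_sub_mul_two_pow hd hj hj' ⟨n - n', by linarith⟩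

theorem exists_shift_sameDyadicCell (hd : Even d) (x y : EuclideanSpace ℝ (Fin d)) (L : ℕ)
    (h : ∀ i, |x i - y i| * 2 ^ L * (d + 1) ≤ 1) :
    ∃ j ≤ d, SameDyadicCell L (x + shiftv d j) (y + shiftv d j) := by
  by_contra! hcut
  have : ∀ j : Fin (d + 1), ∃ i,
      ⌊(x i + j / (d + 1)) * 2 ^ L⌋ ≠ ⌊(y i + j / (d + 1)) * 2 ^ L⌋ := by
    intro j
    simpa [SameDyadicCell] using hcut j (Nat.lt_succ_iff.1 j.isLt)
  choose g hg using this
  obtain ⟨j, j', hne, hjj'⟩ := Fintype.exists_ne_map_eq_of_card_lt g (by simp)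
  refine hne (Fin.ext (eq_of_floor_add_shift_ne hd (h (g j)) (Nat.lt_succ_iff.1 j.isLt)
    (Nat.lt_succ_iff.1 j'.isLt) (hg j) ?_))
  rw [hjj']
  exact hg j'

end Shifts

def IsPredOrSuccIn {α β : Type*} [LinearOrder β] (f : α → β) (P : Finset α) (b : β) (x : α) :
    Prop :=
  (f x ≤ b ∧ ∀ y ∈ P, f y ≤ b → f y ≤ f x) ∨ (b ≤ f x ∧ ∀ y ∈ P, b ≤ f y → f x ≤ f y)

lemma exists_isPredOrSuccIn_mem_uIcc {α β : Type*} [LinearOrder β] (f : α → β) {P : Finset α}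
    {y : α} (hy : y ∈ P) (b : β) : ∃ x ∈ P, IsPredOrSuccIn f P b x ∧ f x ∈ Set.uIcc b (f y) := by
  classical
  rcases le_total (f y) b with hyb | hby
  · obtain ⟨x, hx, hmax⟩ := (P.filter (f · ≤ b)).exists_max_image f ⟨y, by simp [hy, hyb]⟩
    rw [Finset.mem_filter] at hx
    refine ⟨x, hx.1, .inl ⟨hx.2, fun z hz hzb => hmax z (by simp [hz, hzb])⟩, ?_⟩
    exact Set.mem_uIcc.2 (.inr ⟨hmax y (by simp [hy, hyb]), hx.2⟩)
  · obtain ⟨x, hx, hmin⟩ := (P.filter (b ≤ f ·)).exists_min_image f ⟨y, by simp [hy, hby]⟩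
    rw [Finset.mem_filter] at hx
    refine ⟨x, hx.1, .inr ⟨hx.2, fun z hz hbz => hmin z (by simp [hz, hbz])⟩, ?_⟩
    exact Set.mem_uIcc.2 (.inl ⟨hx.2, hmin y (by simp [hy, hby])⟩)

def IsShiftedZOrderNeighbor (d : ℕ) [NeZero d] (P : Finset (EuclideanSpace ℝ (Fin d)))
    (q p : EuclideanSpace ℝ (Fin d)) : Prop :=
  ∃ j ≤ d, IsPredOrSuccIn (fun p => zval d (p + shiftv d j)) P (zval d (q + shiftv d j)) p

section Neighbors

variable {d : ℕ} [NeZero d] {P : Finset (EuclideanSpace ℝ (Fin d))}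
  {q p₀ : EuclideanSpace ℝ (Fin d)}

theorem exists_isShiftedZOrderNeighbor_dist_le_of_scale (hd : Even d)
    (hP : ∀ p ∈ P, ∀ i, p i ∈ Set.Ico 0 1) (hq : ∀ i, q i ∈ Set.Ico 0 1) (hp₀ : p₀ ∈ P) {L : ℕ}
    (hL : dist q p₀ * 2 ^ L * (d + 1) ≤ 1) :
    ∃ p ∈ P, IsShiftedZOrderNeighbor d P q p ∧ dist q p ≤ √d / 2 ^ L := by
  have hcoord : ∀ i, |q i - p₀ i| * 2 ^ L * (d + 1) ≤ 1 := fun i =>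
    le_trans (by gcongr; exact PiLp.dist_apply_le q p₀ i) hL
  obtain ⟨j, hj, hcell⟩ := exists_shift_sameDyadicCell hd q p₀ L hcoord
  obtain ⟨p, hp, hnb, hmem⟩ := exists_isPredOrSuccIn_mem_uIcc
    (fun p => zval d (p + shiftv d j)) hp₀ (zval d (q + shiftv d j))
  have hcell' := hcell.of_zval_mem_uIcc (add_shiftv_mem_Ico hq hj)
    (add_shiftv_mem_Ico (hP p₀ hp₀) hj) (add_shiftv_mem_Ico (hP p hp) hj) hmem
  refine ⟨p, hp, ⟨j, hj, hnb⟩, ?_⟩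
  simpa only [dist_add_right] using hcell'.dist_le

theorem exists_isShiftedZOrderNeighbor_dist_le (hd : Even d)
    (hP : ∀ p ∈ P, ∀ i, p i ∈ Set.Ico 0 1) (hq : ∀ i, q i ∈ Set.Ico 0 1) (hp₀ : p₀ ∈ P) :
    ∃ p ∈ P, IsShiftedZOrderNeighbor d P q p ∧ dist q p ≤ 2 * √d * (d + 1) * dist q p₀ := by
  set r := dist q p₀
  rcases (dist_nonneg : 0 ≤ r).eq_or_lt with hr | hr
  · obtain rfl : q = p₀ := dist_eq_zero.1 hr.symm
    exact ⟨q, hp₀, ⟨0, Nat.zero_le d, .inl ⟨le_rfl, fun _ _ h => h⟩⟩, by simp [r]⟩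
  rcases le_or_gt (r * (d + 1)) 1 with hsmall | hbig
  · obtain ⟨L, hL, hL'⟩ := exists_nat_pow_near (one_le_one_div (by positivity) hsmall) one_lt_two
    have hscale : r * 2 ^ L * (d + 1) ≤ 1 := by
      rw [le_div_iff₀ (by positivity)] at hL
      linarith
    have hL'' : 1 ≤ 2 * r * (d + 1) * 2 ^ L := by
      rw [div_lt_iff₀ (by positivity), pow_succ] at hL'
      linarith
    obtain ⟨p, hp, hnb, hdist⟩ :=
      exists_isShiftedZOrderNeighbor_dist_le_of_scale hd hP hq hp₀ hscale
    refine ⟨p, hp, hnb, hdist.trans ?_⟩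
    rw [div_le_iff₀ (by positivity)]
    nlinarith [mul_le_mul_of_nonneg_left hL'' (Real.sqrt_nonneg d)]
  · obtain ⟨p, hp, hnb, -⟩ := exists_isPredOrSuccIn_mem_uIcc
      (fun p => zval d (p + shiftv d 0)) hp₀ (zval d (q + shiftv d 0))
    refine ⟨p, hp, ⟨0, Nat.zero_le d, hnb⟩, (dist_le_sqrt_of_mem_Ico hq (hP p hp)).trans ?_⟩
    nlinarith [Real.sqrt_nonneg d]

end Neighbors

/-- Approximate nearest neighbors via shifted z-orders: among the z-order
predecessors and successors of `q` in the `d+1` shifted lists there is a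
`c`-approximate nearest neighbor of `q` in `P`, where `c = √d(4d+4) + 1`. -/
theorem stmt8 (d : ℕ) [NeZero d] (hd : Even d)
    (P : Finset (EuclideanSpace ℝ (Fin d))) (hP : P.Nonempty)
    (hPr : ∀ p ∈ P, ∀ i, p i ∈ Set.Ico (0:ℝ) 1)
    (q : EuclideanSpace ℝ (Fin d)) (hq : ∀ i, q i ∈ Set.Ico (0:ℝ) 1) :
    ∃ pstar ∈ P,
      (∃ j ≤ d,
        (zval d (pstar + shiftv d j) ≤ zval d (q + shiftv d j) ∧
          ∀ p ∈ P, zval d (p + shiftv d j) ≤ zval d (q + shiftv d j) →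
            zval d (p + shiftv d j) ≤ zval d (pstar + shiftv d j)) ∨
        (zval d (q + shiftv d j) ≤ zval d (pstar + shiftv d j) ∧
          ∀ p ∈ P, zval d (q + shiftv d j) ≤ zval d (p + shiftv d j) →
            zval d (pstar + shiftv d j) ≤ zval d (p + shiftv d j))) ∧
      ∀ p ∈ P, dist q pstar ≤ (Real.sqrt d * (4 * (d:ℝ) + 4) + 1) * dist q p := by
  obtain ⟨p₀, hp₀, hmin⟩ := P.exists_min_image (dist q) hP
  obtain ⟨p, hp, hnb, hdist⟩ := exists_isShiftedZOrderNeighbor_dist_le hd hPr hq hp₀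
  refine ⟨p, hp, hnb, fun p' hp' => hdist.trans ?_⟩
  have hc : 2 * √d * (d + 1) ≤ √d * (4 * d + 4) + 1 := by nlinarith [Real.sqrt_nonneg d]
  exact mul_le_mul hc (hmin p' hp') dist_nonneg (by positivity)
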